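/- Let λ = exp(2πi/7) and for k = 0,…,6 let p_k = (λᵏ, λ²ᵏ, λ⁴ᵏ) ∈ ℂ³. The seven projective points [p_0],…,[p_6] are in general position in ℙ²(ℂ): (i) for any three distinct indices k, l, m ∈ {0,…,6}, the vectors p_k, p_l, p_m are linearly independent over ℂ (no three of the points lie on a projective line), and (ii) for any six distinct indices, there is no nonzero homogeneous polynomial of degree 2 in ℂ[z₀,z₁,z₂] vanishing at all six corresponding points (no six of the points lie on a conic). -/

import Mathlib

open MvPolynomial

noncomputable def lam : ℂ := Complex.exp (2 * Real.pi * Complex.I / 7)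

/-- The point `p_k = (λᵏ, λ²ᵏ, λ⁴ᵏ) ∈ ℂ³`. -/
noncomputable def pPoint (k : ℕ) : Fin 3 → ℂ := ![lam ^ k, lam ^ (2 * k), lam ^ (4 * k)]

/-!
Since `p_k = (z, z², z⁴)` with `z = λᵏ`, both parts are one-variable facts about seventh roots
of unity. For three points, the determinant of the rows `(a, a², a⁴)` is
`abc (b - a)(c - a)(c - b)(a + b + c)`, and three seventh roots of unity never sum to zero:
conjugation inverts them, which forces their ratios to be cube roots of unity.
For six points, the degree-2 monomial `x^a y^b w^c` takes the value `z^(a + 2b + 4c)` at `p_k`,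
and the six exponents `a + 2b + 4c` are `2, 8, 3, 4, 5, 6`, distinct and nonzero mod 7.
So a conic through six of the `p_k` yields a polynomial of degree `< 7`, with the coefficients of
the conic, vanishing at `0` and at six distinct powers of `λ`; it is zero, and so is the conic.
-/

open scoped Polynomial ComplexConjugate

theorem Complex.add_add_ne_zero_of_pow_eq_one {a b c : ℂ} {n : ℕ} (hn : Nat.Coprime 3 n)
    (ha : a ^ n = 1) (hb : b ^ n = 1) (hc : c ^ n = 1) : a + b + c ≠ 0 := by
  have hn0 : n ≠ 0 := by rintro rfl; norm_num at hn
  have ha0 : a ≠ 0 := by rintro rfl; simp [zero_pow hn0] at ha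
  intro habc
  set u := b / a
  set v := c / a
  have hu : u ^ n = 1 := by rw [div_pow, ha, hb, div_one]
  have hv : v ^ n = 1 := by rw [div_pow, ha, hc, div_one]
  have hu0 : u ≠ 0 := by rintro h; simp [h, zero_pow hn0] at hu
  have hv0 : v ≠ 0 := by rintro h; simp [h, zero_pow hn0] at hv
  have hsum : 1 + u + v = 0 := by
    simp only [u, v]; field_simp; linear_combination habc
  -- conjugation inverts elements of norm one
  have hsum_inv : 1 + u⁻¹ + v⁻¹ = 0 := by
    rw [Complex.inv_eq_conj (norm_eq_one_of_pow_eq_one hu hn0),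
      Complex.inv_eq_conj (norm_eq_one_of_pow_eq_one hv hn0)]
    simpa using congrArg conj hsum
  have hquad : u ^ 2 + u + 1 = 0 := by
    field_simp at hsum_inv
    linear_combination (u + 1) * hsum - hsum_inv
  have hcube : u ^ 3 = 1 := by linear_combination (u - 1) * hquad
  have hu1 : u = 1 := by simpa [hn.gcd_eq_one] using pow_gcd_eq_one.2 ⟨hcube, hu⟩
  rw [hu1] at hquad
  norm_num at hquad

lemma isPrimitiveRoot_lam : IsPrimitiveRoot lam 7 := by
  simpa [lam] using Complex.isPrimitiveRoot_exp 7 (by norm_num)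

lemma lam_pow_injective : Function.Injective fun k : Fin 7 => lam ^ (k : ℕ) :=
  fun k l h => Fin.ext (isPrimitiveRoot_lam.pow_inj k.isLt l.isLt h)

lemma lam_pow_pow_seven (k : ℕ) : (lam ^ k) ^ 7 = 1 := by
  rw [← pow_mul, mul_comm, pow_mul, isPrimitiveRoot_lam.pow_eq_one, one_pow]

lemma lam_pow_ne_zero (k : ℕ) : lam ^ k ≠ 0 :=
  pow_ne_zero k (isPrimitiveRoot_lam.ne_zero (by norm_num))

lemma pPoint_eq (k : ℕ) : pPoint k = ![lam ^ k, (lam ^ k) ^ 2, (lam ^ k) ^ 4] := by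
  simp only [pPoint, ← pow_mul, mul_comm]

lemma Matrix.det_rows_pow_one_two_four {R : Type*} [CommRing R] (a b c : R) :
    (Matrix.of ![![a, a ^ 2, a ^ 4], ![b, b ^ 2, b ^ 4], ![c, c ^ 2, c ^ 4]]).det =
      a * b * c * (b - a) * (c - a) * (c - b) * (a + b + c) := by
  simp only [Matrix.det_fin_three, Matrix.of_apply, Matrix.cons_val', Matrix.cons_val_zero,
    Matrix.cons_val_fin_one, Matrix.cons_val_one, Matrix.cons_val]
  ring

lemma linearIndependent_pow_one_two_four {K : Type*} [Field K] {a b c : K}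
    (ha : a ≠ 0) (hb : b ≠ 0) (hc : c ≠ 0) (hab : a ≠ b) (hac : a ≠ c) (hbc : b ≠ c)
    (habc : a + b + c ≠ 0) :
    LinearIndependent K ![![a, a ^ 2, a ^ 4], ![b, b ^ 2, b ^ 4], ![c, c ^ 2, c ^ 4]] := by
  refine (Matrix.linearIndependent_rows_iff_isUnit
    (A := Matrix.of ![![a, a ^ 2, a ^ 4], ![b, b ^ 2, b ^ 4], ![c, c ^ 2, c ^ 4]])).mpr ?_
  rw [Matrix.isUnit_iff_isUnit_det, Matrix.det_rows_pow_one_two_four]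
  exact (by simp [*, sub_eq_zero, Ne.symm] : _ ≠ (0 : K)).isUnit

lemma pPoints_linearIndependent {k l m : Fin 7} (hkl : k ≠ l) (hkm : k ≠ m) (hlm : l ≠ m) :
    LinearIndependent ℂ ![pPoint k, pPoint l, pPoint m] := by
  simp only [pPoint_eq]
  exact linearIndependent_pow_one_two_four
    (lam_pow_ne_zero _) (lam_pow_ne_zero _) (lam_pow_ne_zero _)
    (lam_pow_injective.ne hkl) (lam_pow_injective.ne hkm) (lam_pow_injective.ne hlm)
    (Complex.add_add_ne_zero_of_pow_eq_one (by norm_num)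
      (lam_pow_pow_seven _) (lam_pow_pow_seven _) (lam_pow_pow_seven _))

lemma MvPolynomial.IsHomogeneous.degree_eq_of_coeff_ne_zero {σ R : Type*} [CommSemiring R]
    {φ : MvPolynomial σ R} {n : ℕ} (hφ : φ.IsHomogeneous n) {d : σ →₀ ℕ}
    (hd : coeff d φ ≠ 0) : d.degree = n := by
  rw [Finsupp.degree_eq_weight_one]
  exact hφ hd

def weightMod7 (d : Fin 3 →₀ ℕ) : ℕ := (d 0 + 2 * d 1 + 4 * d 2) % 7

lemma prod_pow_eq_pow_weightMod7 {M : Type*} [CommMonoid M] {z : M} (hz : z ^ 7 = 1)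
    (d : Fin 3 →₀ ℕ) : ∏ i, ![z, z ^ 2, z ^ 4] i ^ d i = z ^ weightMod7 d := by
  rw [weightMod7, ← pow_eq_pow_mod _ hz, Fin.prod_univ_three]
  simp only [Matrix.cons_val_zero, Matrix.cons_val_one, Matrix.cons_val_two, Matrix.head_cons,
    Matrix.tail_cons, ← pow_mul, ← pow_add]

lemma Finsupp.degree_fin_three (d : Fin 3 →₀ ℕ) : d.degree = d 0 + d 1 + d 2 := by
  rw [Finsupp.degree_eq_sum, Fin.sum_univ_three]

lemma weightMod7_ne_zero {d : Fin 3 →₀ ℕ} (hd : d.degree = 2) : weightMod7 d ≠ 0 := by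
  rw [Finsupp.degree_fin_three] at hd
  unfold weightMod7
  generalize d 0 = x, d 1 = y, d 2 = z at *
  obtain ⟨hx, hy⟩ : x ≤ 2 ∧ y ≤ 2 := by omega
  interval_cases x <;> interval_cases y <;> omega

lemma weightMod7_injOn : Set.InjOn weightMod7 {d | d.degree = 2} := by
  intro d hd d' hd' h
  simp only [Set.mem_ofPred_eq, Finsupp.degree_fin_three] at hd hd'
  unfold weightMod7 at h
  have key : d 0 = d' 0 ∧ d 1 = d' 1 ∧ d 2 = d' 2 := by
    generalize d 0 = x, d 1 = y, d 2 = z, d' 0 = x', d' 1 = y', d' 2 = z' at *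
    obtain ⟨hx, hy, hx', hy'⟩ : x ≤ 2 ∧ y ≤ 2 ∧ x' ≤ 2 ∧ y' ≤ 2 := by omega
    interval_cases x <;> interval_cases y <;> interval_cases x' <;> interval_cases y' <;> omega
  ext i
  fin_cases i <;> simp [key]

/-- `q(z, z², z⁴)` as a polynomial in `z`, with exponents reduced mod 7. -/
noncomputable def foldPoly {R : Type*} [CommRing R] (q : MvPolynomial (Fin 3) R) : R[X] :=
  ∑ d ∈ q.support, Polynomial.monomial (weightMod7 d) (coeff d q)

section foldPoly

variable {R : Type*} [CommRing R] {q : MvPolynomial (Fin 3) R}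

lemma eval_foldPoly {z : R} (hz : z ^ 7 = 1) :
    (foldPoly q).eval z = eval ![z, z ^ 2, z ^ 4] q := by
  simp only [foldPoly, Polynomial.eval_finsetSum, Polynomial.eval_monomial, eval_eq',
    prod_pow_eq_pow_weightMod7 hz]

lemma natDegree_foldPoly_lt : (foldPoly q).natDegree < 7 := by
  refine Nat.lt_succ_of_le (Polynomial.natDegree_sum_le_of_forall_le _ _ fun d _ => ?_)
  exact (Polynomial.natDegree_monomial_le _).trans
    (Nat.le_of_lt_succ (Nat.mod_lt _ (by norm_num)))

lemma foldPoly_eval_zero (hq : q.IsHomogeneous 2) : (foldPoly q).eval 0 = 0 := by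
  refine (Polynomial.eval_finsetSum _ _ _).trans (Finset.sum_eq_zero fun d hd => ?_)
  rw [Polynomial.eval_monomial, zero_pow (weightMod7_ne_zero
    (hq.degree_eq_of_coeff_ne_zero (mem_support_iff.mp hd))), mul_zero]

lemma coeff_foldPoly (hq : q.IsHomogeneous 2) {d : Fin 3 →₀ ℕ} (hd : d.degree = 2) :
    (foldPoly q).coeff (weightMod7 d) = coeff d q := by
  rw [foldPoly, Polynomial.finsetSum_coeff]
  simp only [Polynomial.coeff_monomial]
  rw [Finset.sum_eq_single d]
  · rw [if_pos rfl]
  · intro d' hd' hne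
    rw [if_neg fun h => hne (weightMod7_injOn
      (hq.degree_eq_of_coeff_ne_zero (mem_support_iff.mp hd')) hd h)]
  · intro hd'
    rw [if_pos rfl, notMem_support_iff.mp hd']

end foldPoly

lemma eq_zero_of_isHomogeneous_two_of_eval_pPoint {s : Finset (Fin 7)} (hs : s.card = 6)
    {q : MvPolynomial (Fin 3) ℂ} (hq : q.IsHomogeneous 2)
    (hv : ∀ k ∈ s, eval (pPoint k) q = 0) : q = 0 := by
  have hfold : foldPoly q = 0 := by
    refine Polynomial.eq_zero_of_natDegree_lt_card_of_eval_eq_zero' _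
      (insert 0 (s.image fun k : Fin 7 => lam ^ (k : ℕ))) ?_ ?_
    · simp only [Finset.mem_insert, Finset.mem_image]
      rintro _ (rfl | ⟨k, hk, rfl⟩)
      · exact foldPoly_eval_zero hq
      · rw [eval_foldPoly (lam_pow_pow_seven k), ← pPoint_eq, hv k hk]
    · rw [Finset.card_insert_of_notMem, Finset.card_image_of_injective _ lam_pow_injective, hs]
      · exact natDegree_foldPoly_lt
      · simpa only [Finset.mem_image, not_exists, not_and]
          using fun (k : Fin 7) _ => lam_pow_ne_zero k
  ext d
  by_contra hd
  rw [coeff_zero, ← coeff_foldPoly hq (hq.degree_eq_of_coeff_ne_zero hd), hfold,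
    Polynomial.coeff_zero] at hd
  exact hd rfl

/-- The seven points `[p_0], …, [p_6]` are in general position in ℙ²(ℂ):
(i) no three of them lie on a projective line (any three of the vectors are linearly
independent over ℂ), and (ii) no six of them lie on a conic (no nonzero homogeneous
polynomial of degree 2 vanishes at six of the points). -/
theorem seven_points_in_general_position :
    (∀ k l m : Fin 7, k ≠ l → k ≠ m → l ≠ m →
      LinearIndependent ℂ ![pPoint (k : ℕ), pPoint (l : ℕ), pPoint (m : ℕ)]) ∧
    (∀ s : Finset (Fin 7), s.card = 6 → ∀ q : MvPolynomial (Fin 3) ℂ,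
      q.IsHomogeneous 2 → (∀ k ∈ s, eval (pPoint (k : ℕ)) q = 0) → q = 0) :=
  ⟨fun _ _ _ => pPoints_linearIndependent,
    fun _ hs _ hq hv => eq_zero_of_isHomogeneous_two_of_eval_pPoint hs hq hv⟩
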